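/- For every even integer n ≥ 2, the 2 × (n²/2) grid admits a perfect game of PackIt!. -/

import Mathlib

/-- The `k`-th triangular number `T_k = k(k+1)/2`. -/
def tri (k : ℕ) : ℕ := k * (k + 1) / 2

/-- `tau r` is the largest `k` such that `T_k ≤ r`. -/
def tau (r : ℕ) : ℕ := Nat.findGreatest (fun k => tri k ≤ r) r

/-- The gap `γ(m,n) = m·n − T_{τ(m·n)}`. -/
def gap (m n : ℕ) : ℕ := m * n - tri (tau (m * n))

/-- `P(m,n)`: the set of primes `p` with `n < p ≤ K(m,n) = τ(m·n)`. -/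
def primeSet (m n : ℕ) : Finset ℕ := (Finset.Ioc n (tau (m * n))).filter Nat.Prime

/-- The cells occupied by an axis-aligned rectangle with top-left corner
`pos` and dimensions `dim` (height, width). -/
def rectCells (pos dim : ℕ × ℕ) : Finset (ℕ × ℕ) :=
  Finset.Ico pos.1 (pos.1 + dim.1) ×ˢ Finset.Ico pos.2 (pos.2 + dim.2)

/-- A perfect game of PackIt! on the `m × n` grid: a finite sequence of
axis-aligned rectangles, placed at turns `1, …, K`, such that the rectangle
placed at turn `t` has area `t` or `t+1`, the rectangles are pairwise
disjoint, and together they cover all `m·n` cells of the grid. -/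
structure PerfectPackItGame (m n : ℕ) where
  K : ℕ
  pos : ℕ → ℕ × ℕ
  dim : ℕ → ℕ × ℕ
  area_valid : ∀ t ∈ Finset.Icc 1 K,
    (dim t).1 * (dim t).2 = t ∨ (dim t).1 * (dim t).2 = t + 1
  pairwise_disjoint : ∀ t₁ ∈ Finset.Icc 1 K, ∀ t₂ ∈ Finset.Icc 1 K, t₁ ≠ t₂ →
    Disjoint (rectCells (pos t₁) (dim t₁)) (rectCells (pos t₂) (dim t₂))
  covers : (Finset.Icc 1 K).biUnion (fun t => rectCells (pos t) (dim t)) =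
    Finset.range m ×ˢ Finset.range n

/- ### Auxiliary arithmetic lemmas -/

lemma two_tri (k : ℕ) : 2 * tri k = k * (k + 1) := by
  have h : 2 ∣ k * (k + 1) := (Nat.even_mul_succ_self k).two_dvd
  exact Nat.mul_div_cancel' h

lemma tri_succ (k : ℕ) : tri (k + 1) = tri k + (k + 1) := by
  unfold tri
  rw [show (k+1) * (k+1+1) = k * (k+1) + (k+1) * 2 by ring,
    Nat.add_mul_div_right _ _ (by norm_num)]

lemma tri_add (a b : ℕ) : tri (a + b) = tri a + tri b + a * b := by
  induction b with
  | zero => simp [tri]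
  | succ b ih =>
    have h1 : a + (b+1) = (a+b) + 1 := by ring
    rw [h1, tri_succ, ih, tri_succ]
    have : a * (b+1) = a * b + a := by ring
    omega

lemma sum_Icc_id (n : ℕ) : ∑ t ∈ Finset.Icc 1 n, t = tri n := by
  induction n with
  | zero => simp [tri]
  | succ n ih =>
    rw [Finset.sum_Icc_succ_top (by omega), ih, tri_succ]

/-- Every `w` between `T_j` and `T_j + j·i` is the sum of a `j`-element
subset of `{1, …, j+i}`. -/
lemma exists_subset_sum : ∀ j i w : ℕ, tri j ≤ w → w ≤ tri j + j * i →
    ∃ S : Finset ℕ, S ⊆ Finset.Icc 1 (j + i) ∧ S.card = j ∧ ∑ t ∈ S, t = w := by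
  intro j
  induction j with
  | zero =>
    intro i w h1 h2
    refine ⟨∅, by simp, by simp, ?_⟩
    simp [tri] at h1 h2 ⊢
    omega
  | succ j ih =>
    intro i
    induction i with
    | zero =>
      intro w h1 h2
      refine ⟨Finset.Icc 1 (j+1), by simp, by simp, ?_⟩
      rw [sum_Icc_id]
      omega
    | succ i ih2 =>
      intro w h1 h2
      by_cases hc : w ≤ tri (j+1) + (j+1) * i
      · obtain ⟨S, hsub, hcard, hsum⟩ := ih2 w h1 hc
        exact ⟨S, hsub.trans (Finset.Icc_subset_Icc_right (by omega)), hcard, hsum⟩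
      · push_neg at hc
        have e1 := tri_succ j
        have e2 : (j+1) * i = j*i + i := by ring
        have e3 : j * (i+1) = j*i + j := by ring
        have e4 : (j+1) * (i+1) = j*i + j + i + 1 := by ring
        have hb1 : tri j ≤ w - (j+i+2) := by omega
        have hb2 : w - (j+i+2) ≤ tri j + j * (i+1) := by omega
        have hM : j + i + 2 ≤ w := by
          have htj : j + 1 ≤ tri (j+1) := by
            have := two_tri (j+1); nlinarith
          omega
        obtain ⟨S, hsub, hcard, hsum⟩ := ih (i+1) (w - (j+i+2)) hb1 hb2
        have hnot : (j+i+2) ∉ S := by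
          intro h
          have := hsub h
          simp [Finset.mem_Icc] at this
          omega
        refine ⟨insert (j+i+2) S, ?_, ?_, ?_⟩
        · intro x hx
          rcases Finset.mem_insert.mp hx with rfl | hx
          · simp [Finset.mem_Icc]; omega
          · have := hsub hx
            simp [Finset.mem_Icc] at this ⊢
            omega
        · rw [Finset.card_insert_of_notMem hnot, hcard]
        · rw [Finset.sum_insert hnot, hsum]
          omega

lemma exists_K (N : ℕ) : ∃ K, tri K ≤ N ∧ N ≤ tri K + K := by
  induction N with
  | zero => exact ⟨0, by simp [tri], by simp [tri]⟩
  | succ N ih =>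
    obtain ⟨K, h1, h2⟩ := ih
    by_cases h : N + 1 ≤ tri K + K
    · exact ⟨K, by omega, h⟩
    · exact ⟨K+1, by have := tri_succ K; omega, by have := tri_succ K; omega⟩

/- ### A balanced assignment of areas to two rows -/

lemma exists_balanced (c : ℕ) (hc : c = 2 ∨ 8 ≤ c) :
    ∃ (K : ℕ) (a : ℕ → ℕ) (S : Finset ℕ), S ⊆ Finset.Icc 1 K ∧
      (∀ t ∈ Finset.Icc 1 K, a t = t ∨ a t = t + 1) ∧
      ∑ t ∈ S, a t = c ∧ ∑ t ∈ Finset.Icc 1 K \ S, a t = c := by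
  classical
  rcases hc with rfl | hc
  · exact ⟨2, fun _ => 2, {1}, by decide, by decide, by simp, by decide⟩
  · obtain ⟨K, hK1, hK2⟩ := exists_K (2 * c)
    have hK5 : 5 ≤ K := by
      by_contra h
      push_neg at h
      have h14 : tri K + K ≤ 14 := by
        interval_cases K <;> norm_num [tri]
      omega
    obtain ⟨j, i, w, hK, hw1, hw2, hbj, hbi, hwc, hcomp⟩ :
        ∃ j i w, K = j + i ∧ tri j ≤ w ∧ w ≤ tri j + j * i ∧
          (2 * c - tri K + 1) / 2 ≤ j ∧
          (2 * c - tri K) - (2 * c - tri K + 1) / 2 ≤ i ∧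
          w + (2 * c - tri K + 1) / 2 = c ∧
          tri K + ((2 * c - tri K) - (2 * c - tri K + 1) / 2) = c + w := by
      rcases Nat.even_or_odd K with ⟨p, hp⟩ | ⟨p, hp⟩
      · have htriK : tri K = tri p + tri p + p * p := by rw [hp]; exact tri_add p p
        have h2T : 2 * tri p = p * p + p := by
          have := two_tri p
          have : p * (p + 1) = p * p + p := by ring
          omega
        have hpp : 2 * p ≤ p * p := Nat.mul_le_mul_right p (by omega)
        exact ⟨p, p, c - (2 * c - tri K + 1) / 2, by omega, by omega, by omega,
          by omega, by omega, by omega, by omega⟩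
      · have hp' : K = p + (p + 1) := by omega
        have htriK : tri K = tri p + tri (p + 1) + p * (p + 1) := by
          rw [hp']; exact tri_add p (p+1)
        have htsucc : tri (p + 1) = tri p + (p + 1) := tri_succ p
        have h2T : 2 * tri p = p * p + p := by
          have := two_tri p
          have : p * (p + 1) = p * p + p := by ring
          omega
        have e5 : p * (p + 1) = p * p + p := by ring
        have e6 : (p + 1) * p = p * p + p := by ring
        have hpp : 2 * p ≤ p * p := Nat.mul_le_mul_right p (by omega)
        exact ⟨p + 1, p, c - (2 * c - tri K + 1) / 2, by omega, by omega, by omega,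
          by omega, by omega, by omega, by omega⟩
    set b0 := (2 * c - tri K + 1) / 2 with hb0def
    set b1 := (2 * c - tri K) - b0 with hb1def
    obtain ⟨S, hsub, hcard, hsum⟩ := exists_subset_sum j i w hw1 hw2
    rw [← hK] at hsub
    obtain ⟨B0, hB0sub, hB0card⟩ :=
      Finset.exists_subset_card_eq (s := S) (n := b0) (by rw [hcard]; exact hbj)
    have hcompcard : (Finset.Icc 1 K \ S).card = i := by
      rw [Finset.card_sdiff_of_subset hsub, Nat.card_Icc, hcard]
      omega
    obtain ⟨B1, hB1sub, hB1card⟩ :=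
      Finset.exists_subset_card_eq (s := Finset.Icc 1 K \ S) (n := b1)
        (by rw [hcompcard]; exact hbi)
    have hsplit : ∀ t, (if t ∈ B0 ∪ B1 then t + 1 else t)
        = t + (if t ∈ B0 ∪ B1 then 1 else 0) := by
      intro t; split <;> omega
    have hint0 : S ∩ (B0 ∪ B1) = B0 := by
      ext x
      simp only [Finset.mem_inter, Finset.mem_union]
      constructor
      · rintro ⟨hxS, hx | hx⟩
        · exact hx
        · exact absurd hxS (Finset.mem_sdiff.mp (hB1sub hx)).2.elim
      · intro hx
        exact ⟨hB0sub hx, Or.inl hx⟩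
    have hint1 : (Finset.Icc 1 K \ S) ∩ (B0 ∪ B1) = B1 := by
      ext x
      simp only [Finset.mem_inter, Finset.mem_union]
      constructor
      · rintro ⟨hxC, hx | hx⟩
        · exact absurd (hB0sub hx) (Finset.mem_sdiff.mp hxC).2.elim
        · exact hx
      · intro hx
        exact ⟨hB1sub hx, Or.inr hx⟩
    have h1 : ∑ t ∈ Finset.Icc 1 K \ S, t + ∑ t ∈ S, t = ∑ t ∈ Finset.Icc 1 K, t :=
      Finset.sum_sdiff hsub
    rw [hsum, sum_Icc_id] at h1
    have hwle : w ≤ tri K := by omega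
    have hsd : ∑ t ∈ Finset.Icc 1 K \ S, t = tri K - w := by omega
    refine ⟨K, fun t => if t ∈ B0 ∪ B1 then t + 1 else t, S, hsub, ?_, ?_, ?_⟩
    · intro t _
      by_cases h : t ∈ B0 ∪ B1 <;> simp [h]
    · rw [Finset.sum_congr rfl (fun t _ => hsplit t), Finset.sum_add_distrib, hsum,
        Finset.sum_ite_mem, hint0, Finset.sum_const, smul_eq_mul, mul_one, hB0card]
      omega
    · rw [Finset.sum_congr rfl (fun t _ => hsplit t), Finset.sum_add_distrib, hsd,
        Finset.sum_ite_mem, hint1, Finset.sum_const, smul_eq_mul, mul_one, hB1card]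
      omega

/- ### From a balanced assignment to a perfect game -/

/-- The union of consecutive intervals laid out left to right fills an
initial segment. -/
lemma oneD (f : ℕ → ℕ) (T : Finset ℕ) :
    T.biUnion (fun t => Finset.Ico (∑ u ∈ T.filter (· < t), f u)
      (∑ u ∈ T.filter (· < t), f u + f t))
      = Finset.Ico 0 (∑ u ∈ T, f u) := by
  induction T using Finset.induction_on_max with
  | empty => simp
  | insert a T ha ih =>
    have hnot : a ∉ T := fun h => lt_irrefl a (ha a h)
    have hfil : ∀ t ∈ T, (insert a T).filter (· < t) = T.filter (· < t) := by
      intro t ht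
      rw [Finset.filter_insert, if_neg (by have := ha t ht; omega)]
    have hfa : (insert a T).filter (· < a) = T := by
      rw [Finset.filter_insert, if_neg (lt_irrefl a)]
      exact Finset.filter_true_of_mem (fun x hx => ha x hx)
    rw [Finset.biUnion_insert, hfa]
    have hcong : T.biUnion (fun t => Finset.Ico (∑ u ∈ (insert a T).filter (· < t), f u)
        (∑ u ∈ (insert a T).filter (· < t), f u + f t))
        = T.biUnion (fun t => Finset.Ico (∑ u ∈ T.filter (· < t), f u)
        (∑ u ∈ T.filter (· < t), f u + f t)) := by
      apply Finset.biUnion_congr rfl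
      intro t ht
      rw [hfil t ht]
    rw [hcong, ih, Finset.sum_insert hnot, Finset.union_comm,
      Finset.Ico_union_Ico_eq_Ico (Nat.zero_le _) (Nat.le_add_right _ _)]
    congr 1
    omega

/-- The turns assigned to row `i`. -/
def rowFin (K : ℕ) (row : ℕ → ℕ) (i : ℕ) : Finset ℕ :=
  (Finset.Icc 1 K).filter (fun u => row u = i)

/-- The horizontal offset of the rectangle placed at turn `t`. -/
def offF (K : ℕ) (a row : ℕ → ℕ) (t : ℕ) : ℕ :=
  ∑ u ∈ (rowFin K row (row t)).filter (· < t), a u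

lemma mem_rect (x y r o w : ℕ) :
    ((x, y) ∈ rectCells (r, o) (1, w)) ↔ (x = r ∧ o ≤ y ∧ y < o + w) := by
  simp [rectCells, Finset.mem_product, Finset.mem_Ico]
  omega

lemma game_of_rows (c K : ℕ) (a : ℕ → ℕ) (row : ℕ → ℕ)
    (hrow : ∀ t, row t < 2)
    (harea : ∀ t ∈ Finset.Icc 1 K, a t = t ∨ a t = t + 1)
    (hsum : ∀ i < 2, ∑ t ∈ rowFin K row i, a t = c) :
    Nonempty (PerfectPackItGame 2 c) := by
  classical
  have hkey : ∀ t₁ ∈ Finset.Icc 1 K, ∀ t₂ ∈ Finset.Icc 1 K, t₁ < t₂ → row t₁ = row t₂ →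
      offF K a row t₁ + a t₁ ≤ offF K a row t₂ := by
    intro t₁ h1 t₂ h2 hlt hr
    have hnot : t₁ ∉ (rowFin K row (row t₁)).filter (· < t₁) := by
      simp [Finset.mem_filter]
    have hsub : insert t₁ ((rowFin K row (row t₁)).filter (· < t₁))
        ⊆ (rowFin K row (row t₂)).filter (· < t₂) := by
      intro x hx
      rcases Finset.mem_insert.mp hx with rfl | hx
      · simp only [Finset.mem_filter, rowFin]
        exact ⟨⟨h1, hr⟩, hlt⟩
      · simp only [Finset.mem_filter, rowFin] at hx ⊢
        exact ⟨⟨hx.1.1, hx.1.2.trans (by rw [hr])⟩, hx.2.trans hlt⟩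
    have := Finset.sum_le_sum_of_subset (f := a) hsub
    rw [Finset.sum_insert hnot] at this
    unfold offF
    omega
  have hbound : ∀ t ∈ Finset.Icc 1 K, offF K a row t + a t ≤ c := by
    intro t ht
    have hnot : t ∉ (rowFin K row (row t)).filter (· < t) := by
      simp [Finset.mem_filter]
    have hsub : insert t ((rowFin K row (row t)).filter (· < t)) ⊆ rowFin K row (row t) := by
      intro x hx
      rcases Finset.mem_insert.mp hx with rfl | hx
      · simp [rowFin, Finset.mem_filter, ht]
      · exact (Finset.filter_subset _ _) hx
    have h1 := Finset.sum_le_sum_of_subset (f := a) hsub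
    rw [Finset.sum_insert hnot] at h1
    have h2 := hsum (row t) (hrow t)
    unfold offF
    omega
  refine ⟨⟨K, fun t => (row t, offF K a row t), fun t => (1, a t), ?_, ?_, ?_⟩⟩
  · intro t ht
    simpa using harea t ht
  · intro t₁ h1 t₂ h2 hne
    rw [Finset.disjoint_left]
    rintro ⟨x, y⟩ hm1 hm2
    rw [mem_rect] at hm1 hm2
    by_cases hr : row t₁ = row t₂
    · rcases hne.lt_or_gt with hlt | hlt
      · have := hkey t₁ h1 t₂ h2 hlt hr
        omega
      · have := hkey t₂ h2 t₁ h1 hlt hr.symm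
        omega
    · exact hr (hm1.1.symm.trans hm2.1)
  · ext ⟨x, y⟩
    simp only [Finset.mem_biUnion, Finset.mem_product, Finset.mem_range]
    constructor
    · rintro ⟨t, ht, hm⟩
      rw [mem_rect] at hm
      refine ⟨by rw [hm.1]; exact hrow t, ?_⟩
      have := hbound t ht
      omega
    · rintro ⟨hx, hy⟩
      have hs := hsum x hx
      have h1 := oneD a (rowFin K row x)
      have hy' : (y : ℕ) ∈ Finset.Ico 0 (∑ u ∈ rowFin K row x, a u) := by
        rw [Finset.mem_Ico, hs]
        omega
      rw [← h1, Finset.mem_biUnion] at hy'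
      obtain ⟨t, htT, hyI⟩ := hy'
      have htI : t ∈ Finset.Icc 1 K := (Finset.mem_filter.mp htT).1
      have hrt : row t = x := (Finset.mem_filter.mp htT).2
      refine ⟨t, htI, ?_⟩
      rw [mem_rect]
      have hoff : offF K a row t = ∑ u ∈ (rowFin K row x).filter (· < t), a u := by
        unfold offF
        rw [hrt]
      rw [Finset.mem_Ico] at hyI
      exact ⟨hrt.symm, by omega, by omega⟩

/-- For every even integer `n ≥ 2`, the `2 × (n²/2)` grid admits a perfect
game of PackIt!. -/
theorem packit_2_by_half_square (n : ℕ) (hn : 2 ≤ n) (heven : Even n) :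
    Nonempty (PerfectPackItGame 2 (n ^ 2 / 2)) := by
  classical
  obtain ⟨m, rfl⟩ := heven
  have hm : 1 ≤ m := by omega
  have hsq : (m + m) ^ 2 = 2 * (2 * m ^ 2) := by ring
  have hc2 : (m + m) ^ 2 / 2 = 2 * m ^ 2 := by omega
  rw [hc2]
  have hcase : 2 * m ^ 2 = 2 ∨ 8 ≤ 2 * m ^ 2 := by
    rcases eq_or_lt_of_le hm with h | h
    · left; rw [← h]; norm_num
    · right
      have h2 : 2 ≤ m := h
      have := Nat.pow_le_pow_left h2 2
      omega
  obtain ⟨K, a, S, hsub, harea, hs0, hs1⟩ := exists_balanced (2 * m ^ 2) hcase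
  apply game_of_rows (2 * m ^ 2) K a (fun t => if t ∈ S then 0 else 1)
  · intro t
    by_cases h : t ∈ S <;> simp [h]
  · exact harea
  · intro i hi
    interval_cases i
    · have hr0 : rowFin K (fun t => if t ∈ S then 0 else 1) 0 = S := by
        ext x
        simp only [rowFin, Finset.mem_filter]
        constructor
        · rintro ⟨hx, h⟩
          by_contra hxS
          simp [hxS] at h
        · intro hxS
          exact ⟨hsub hxS, by simp [hxS]⟩
      rw [hr0]
      exact hs0
    · have hr1 : rowFin K (fun t => if t ∈ S then 0 else 1) 1 = Finset.Icc 1 K \ S := by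
        ext x
        simp only [rowFin, Finset.mem_filter, Finset.mem_sdiff]
        constructor
        · rintro ⟨hx, h⟩
          refine ⟨hx, fun hxS => by simp [hxS] at h⟩
        · rintro ⟨hx, hxS⟩
          exact ⟨hx, by simp [hxS]⟩
      rw [hr1]
      exact hs1
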